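/- arXiv:2402.04840 — 5 statements merged into one kernel-verified Lean document; each statement's English description precedes it below -/
import Mathlib

section
/- Fix ε > 0 and θ₀ ∈ ℝ. For θ ∈ ℝ define m(θ) = p_ε·(1 − Φ(θ₀ − θ)) + (1 − p_ε)·Φ(θ₀ − θ), the probability that the sign mechanism centered at θ₀ outputs +1 when the data is N(θ,1). Then m is differentiable in θ with m'(θ) = (2p_ε − 1)·φ(θ₀ − θ), and the Fisher information of the two-point family {(m(θ), 1 − m(θ))} evaluated at θ = θ₀, namely m'(θ₀)²/m(θ₀) + m'(θ₀)²/(1 − m(θ₀)), equals (2/π)·((e^ε−1)/(e^ε+1))². -/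
open Real

/-- The standard normal density `φ(u) = (2π)^{-1/2} exp(-u²/2)`. -/
noncomputable def stdGaussianPDF (u : ℝ) : ℝ :=
  (Real.sqrt (2 * Real.pi))⁻¹ * Real.exp (-u ^ 2 / 2)

/-- The standard normal cumulative distribution function. -/
noncomputable def stdGaussianCDF (x : ℝ) : ℝ :=
  ∫ t in Set.Iic x, stdGaussianPDF t

open MeasureTheory intervalIntegral in
lemma pdf_eq : stdGaussianPDF = fun u => (Real.sqrt (2 * Real.pi))⁻¹ * Real.exp (-(1/2) * u ^ 2) := by
  funext u; unfold stdGaussianPDF; rw [show -u ^ 2 / 2 = -(1/2) * u ^ 2 by ring]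

open MeasureTheory in
lemma int_pdf : Integrable stdGaussianPDF := by
  rw [pdf_eq]
  exact (integrable_exp_neg_mul_sq (by norm_num)).const_mul _

lemma cont_pdf : Continuous stdGaussianPDF := by
  unfold stdGaussianPDF
  continuity

open MeasureTheory intervalIntegral in
lemma cdf_eq (x : ℝ) : stdGaussianCDF x = stdGaussianCDF 0 + ∫ t in (0:ℝ)..x, stdGaussianPDF t := by
  unfold stdGaussianCDF
  rw [← integral_Iic_sub_Iic int_pdf.integrableOn int_pdf.integrableOn]
  ring

open MeasureTheory intervalIntegral in
lemma cdf_deriv (x : ℝ) : HasDerivAt stdGaussianCDF (stdGaussianPDF x) x := by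
  have h : HasDerivAt (fun u => stdGaussianCDF 0 + ∫ t in (0:ℝ)..u, stdGaussianPDF t)
      (stdGaussianPDF x) x := by
    refine HasDerivAt.const_add _ (integral_hasDerivAt_right
      (int_pdf.intervalIntegrable) ?_ cont_pdf.continuousAt)
    exact cont_pdf.stronglyMeasurableAtFilter _ _
  exact h.congr_of_eventuallyEq (Filter.Eventually.of_forall fun u => cdf_eq u)

open MeasureTheory in
lemma total : ∫ x : ℝ, stdGaussianPDF x = 1 := by
  rw [pdf_eq]
  rw [MeasureTheory.integral_const_mul, integral_gaussian]
  rw [inv_mul_eq_one₀ (by positivity)]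
  rw [show Real.pi / (1/2) = 2 * Real.pi by ring]

open MeasureTheory in
lemma cdf_zero : stdGaussianCDF 0 = 1/2 := by
  have hsym : stdGaussianCDF 0 = ∫ x in Set.Ioi (0:ℝ), stdGaussianPDF x := by
    unfold stdGaussianCDF
    have h := integral_comp_neg_Iic 0 (fun x => stdGaussianPDF x)
    rw [neg_zero] at h
    rw [← h]
    congr 1; funext x; unfold stdGaussianPDF; rw [neg_pow]
    ring_nf
  have hsplit : (∫ x in Set.Iic (0:ℝ), stdGaussianPDF x) + ∫ x in Set.Ioi (0:ℝ), stdGaussianPDF x = 1 := by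
    rw [← total, ← MeasureTheory.setIntegral_union (Set.Iic_disjoint_Ioi le_rfl)
      measurableSet_Ioi int_pdf.integrableOn int_pdf.integrableOn,
      Set.Iic_union_Ioi, MeasureTheory.Measure.restrict_univ]
  have : stdGaussianCDF 0 + stdGaussianCDF 0 = 1 := by
    calc stdGaussianCDF 0 + stdGaussianCDF 0
        = (∫ x in Set.Iic (0:ℝ), stdGaussianPDF x) + ∫ x in Set.Ioi (0:ℝ), stdGaussianPDF x := by
          rw [← hsym]; rfl
      _ = 1 := hsplit
  linarith

/-- the probability `m(θ)` that the sign mechanism centered at `θ₀`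
outputs `+1` under `N(θ,1)` data is differentiable with derivative
`(2p_ε − 1) φ(θ₀ − θ)`, and its two-point Fisher information at `θ = θ₀`
equals `(2/π)((e^ε−1)/(e^ε+1))²`. -/
theorem sign_mechanism_fisher_info_at_center
    (ε θ₀ pε : ℝ) (hε : 0 < ε) (hpε : pε = Real.exp ε / (1 + Real.exp ε))
    (m : ℝ → ℝ)
    (hm : ∀ θ : ℝ, m θ = pε * (1 - stdGaussianCDF (θ₀ - θ))
        + (1 - pε) * stdGaussianCDF (θ₀ - θ)) :
    (∀ θ : ℝ, HasDerivAt m ((2 * pε - 1) * stdGaussianPDF (θ₀ - θ)) θ) ∧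
    (deriv m θ₀) ^ 2 / m θ₀ + (deriv m θ₀) ^ 2 / (1 - m θ₀)
      = (2 / Real.pi) * ((Real.exp ε - 1) / (Real.exp ε + 1)) ^ 2 := by
  have hd : ∀ θ : ℝ, HasDerivAt m ((2 * pε - 1) * stdGaussianPDF (θ₀ - θ)) θ := by
    intro θ
    have hC : HasDerivAt (fun θ : ℝ => stdGaussianCDF (θ₀ - θ))
        (stdGaussianPDF (θ₀ - θ) * (-1)) θ :=
      (cdf_deriv (θ₀ - θ)).comp θ ((hasDerivAt_id θ).const_sub θ₀)
    have h2 : HasDerivAt (fun θ : ℝ => pε * (1 - stdGaussianCDF (θ₀ - θ))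
        + (1 - pε) * stdGaussianCDF (θ₀ - θ))
        (pε * (-(stdGaussianPDF (θ₀ - θ) * (-1))) + (1 - pε) * (stdGaussianPDF (θ₀ - θ) * (-1))) θ :=
      ((hC.const_sub 1).const_mul pε).add (hC.const_mul (1 - pε))
    have := h2.congr_of_eventuallyEq (Filter.Eventually.of_forall fun u => hm u)
    exact this.congr_deriv (by ring)
  refine ⟨hd, ?_⟩
  have hde : deriv m θ₀ = (2 * pε - 1) * stdGaussianPDF 0 := by
    rw [(hd θ₀).deriv, sub_self]
  have hm0 : m θ₀ = 1/2 := by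
    rw [hm θ₀, sub_self, cdf_zero]; ring
  have hpdf0 : stdGaussianPDF 0 ^ 2 = (2 * Real.pi)⁻¹ := by
    have h0 : stdGaussianPDF 0 = (Real.sqrt (2 * Real.pi))⁻¹ := by
      unfold stdGaussianPDF; norm_num
    rw [h0, inv_pow, Real.sq_sqrt (by positivity)]
  have hq : 2 * pε - 1 = (Real.exp ε - 1) / (Real.exp ε + 1) := by
    rw [hpε]
    have h1 : (1 : ℝ) + Real.exp ε ≠ 0 := by positivity
    have h2 : Real.exp ε + 1 ≠ 0 := by positivity
    field_simp
    ring
  rw [hde, hm0, mul_pow, hpdf0, hq]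
  have hπ : Real.pi ≠ 0 := Real.pi_ne_zero
  field_simp
  ring
end

section
/- For all real numbers x, y, t with 0 ≤ x ≤ 1/2, 0 ≤ y ≤ 1/2, π x² + π y² ≤ 1, and 0 < t ≤ 4π/(1+8π), one has 2t(2πy² − 1) + 4t²(y − x)(2πy² − 1) − 4t²(y − x)² + 1 ≥ 0. -/
set_option maxHeartbeats 800000


open Real

/-- Lemma a_1_right: `ℒ(1 − πy², πy², x, y) ≥ 0` for
`0 ≤ x, y ≤ 1/2`, `πx² + πy² ≤ 1` and `0 < t ≤ 4π/(1+8π)`. -/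
theorem lemma_a1_right
    (x y t : ℝ)
    (hx0 : 0 ≤ x) (hx1 : x ≤ 1 / 2)
    (hy0 : 0 ≤ y) (hy1 : y ≤ 1 / 2)
    (hxy : Real.pi * x ^ 2 + Real.pi * y ^ 2 ≤ 1)
    (ht0 : 0 < t) (ht1 : t ≤ 4 * Real.pi / (1 + 8 * Real.pi)) :
    2 * t * (2 * Real.pi * y ^ 2 - 1)
      + 4 * t ^ 2 * (y - x) * (2 * Real.pi * y ^ 2 - 1)
      - 4 * t ^ 2 * (y - x) ^ 2 + 1 ≥ 0 := by
  have hp : (3.14 : ℝ) < Real.pi := Real.pi_gt_d6.trans_le' (by norm_num)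
  have hp4 : Real.pi < 3.15 := Real.pi_lt_d2
  set p : ℝ := Real.pi with hpdef
  have hp0 : 0 < p := by linarith
  have he : (0:ℝ) < 1 + 8 * p := by linarith
  set T : ℝ := 4 * p / (1 + 8 * p) with hTdef
  have hT0 : 0 < T := div_pos (by linarith) he
  have hT2 : T < 1 / 2 := by
    rw [hTdef, div_lt_iff₀ he]; linarith
  -- auxiliary positivity: 1 + 2y - 2py² - x ≥ 0
  have hH : 0 ≤ 1 + 2 * y - 2 * p * y ^ 2 - x := by
    nlinarith [sq_nonneg (x - y), sq_nonneg (x + y), sq_nonneg x, sq_nonneg y,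
      mul_nonneg hx0 hy0, sq_nonneg (2 * y - 1), sq_nonneg (2 * x - 1),
      mul_nonneg (mul_nonneg hx0 hx0) hy0]
  -- value at t = T is nonnegative
  have hfT : 0 ≤ 1 + 2 * T * (2 * p * y ^ 2 - 1)
      + 4 * T ^ 2 * ((y - x) * ((2 * p * y ^ 2 - 1) - (y - x))) := by
    have hne : (1 + 8 * p) ≠ 0 := ne_of_gt he
    have key : (1 + 8 * p) ^ 2 * (1 + 2 * T * (2 * p * y ^ 2 - 1)
        + 4 * T ^ 2 * ((y - x) * ((2 * p * y ^ 2 - 1) - (y - x))))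
        = (4 * p * y - 1) ^ 2 * (8 * p * y + 8 * p + 1)
          + 64 * p ^ 2 * x * (1 + 2 * y - 2 * p * y ^ 2 - x) := by
      rw [hTdef]; field_simp; ring
    have hrhs : 0 ≤ (4 * p * y - 1) ^ 2 * (8 * p * y + 8 * p + 1)
        + 64 * p ^ 2 * x * (1 + 2 * y - 2 * p * y ^ 2 - x) := by
      have h1 : 0 ≤ (4 * p * y - 1) ^ 2 * (8 * p * y + 8 * p + 1) := by
        apply mul_nonneg (sq_nonneg _)
        nlinarith [mul_nonneg hp0.le hy0]
      have h2 : 0 ≤ 64 * p ^ 2 * x * (1 + 2 * y - 2 * p * y ^ 2 - x) := by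
        apply mul_nonneg (by positivity) hH
      linarith
    have hc : 0 < (1 + 8 * p) ^ 2 := by positivity
    have h' : (1 + 8 * p) ^ 2 * 0 ≤ (1 + 8 * p) ^ 2 * (1 + 2 * T * (2 * p * y ^ 2 - 1)
        + 4 * T ^ 2 * ((y - x) * ((2 * p * y ^ 2 - 1) - (y - x)))) := by
      rw [mul_zero, key]; exact hrhs
    exact le_of_mul_le_mul_left h' hc
  -- interpolation: f(t) * T² = t² * f(T) + (T − t) * (T + t + 2 t u T)
  have hu : -1 ≤ 2 * p * y ^ 2 - 1 := by nlinarith [mul_nonneg hp0.le (sq_nonneg y)]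
  have hlin : 0 ≤ T + t + 2 * t * (2 * p * y ^ 2 - 1) * T := by
    nlinarith [mul_nonneg (mul_nonneg ht0.le hT0.le) (by linarith : (0:ℝ) ≤ 2 * p * y ^ 2)]
  have hidentity : (2 * t * (2 * p * y ^ 2 - 1)
      + 4 * t ^ 2 * (y - x) * (2 * p * y ^ 2 - 1)
      - 4 * t ^ 2 * (y - x) ^ 2 + 1) * T ^ 2
      = t ^ 2 * (1 + 2 * T * (2 * p * y ^ 2 - 1)
          + 4 * T ^ 2 * ((y - x) * ((2 * p * y ^ 2 - 1) - (y - x))))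
        + (T - t) * (T + t + 2 * t * (2 * p * y ^ 2 - 1) * T) := by ring
  have htT : t ≤ T := ht1
  have h1 := mul_nonneg (sq_nonneg t) hfT
  have h2 := mul_nonneg (sub_nonneg.mpr htT) hlin
  have h3 : 0 ≤ (2 * t * (2 * p * y ^ 2 - 1)
      + 4 * t ^ 2 * (y - x) * (2 * p * y ^ 2 - 1)
      - 4 * t ^ 2 * (y - x) ^ 2 + 1) * T ^ 2 := by
    rw [hidentity]; linarith
  have hfinal := (mul_nonneg_iff_of_pos_right (show (0:ℝ) < T ^ 2 by positivity)).mp h3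
  linarith
end

section
/- For all real numbers x, y, t with 0 ≤ x ≤ 1/2, 0 ≤ y ≤ 1/2, π x² + π y² ≤ 1, and 0 < t ≤ 1/2, one has 2tπ(y² − x²) + 4t²π(y − x)(y² − x²) − π²(x² + y²)² + 2π(x² + y²) − 4t²(y − x)² ≥ 0. -/
open Real

theorem aux_lemma_a1_left
    (p x y t : ℝ) (hp3 : 3 < p)
    (hx0 : 0 ≤ x) (hx1 : x ≤ 1 / 2)
    (hy0 : 0 ≤ y) (hy1 : y ≤ 1 / 2)
    (hxy : p * x ^ 2 + p * y ^ 2 ≤ 1)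
    (ht0 : 0 < t) (ht1 : t ≤ 1 / 2) :
    2 * t * p * (y ^ 2 - x ^ 2)
      + 4 * t ^ 2 * p * (y - x) * (y ^ 2 - x ^ 2)
      - p ^ 2 * (x ^ 2 + y ^ 2) ^ 2
      + 2 * p * (x ^ 2 + y ^ 2)
      - 4 * t ^ 2 * (y - x) ^ 2 ≥ 0 := by
  have hp0 : (0:ℝ) < p := by linarith
  have hxy0 : 0 ≤ x * y := mul_nonneg hx0 hy0
  have hq1 : 0 ≤ 1 - p * (x ^ 2 + y ^ 2) := by linarith
  have hA : 0 ≤ (1 - 2*t) * (p * (x^2 + y^2)) := mul_nonneg (by linarith) (by positivity)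
  have hB : 0 ≤ t * (p * y^2) := by positivity
  have hC : 0 ≤ p * (x*y) * (1 - p*(x^2+y^2)) := by positivity
  rcases le_or_gt 1 (p * (x + y)) with hu | hu
  · -- F = (1-2t)q + 4tpy² + q(1-q) + 4t²e²(pu-1)
    have hD : 0 ≤ t^2 * (x-y)^2 * (p*(x+y) - 1) :=
      mul_nonneg (by positivity) (by linarith)
    have hE : 0 ≤ p*(x^2+y^2) * (1 - p*(x^2+y^2)) := by positivity
    nlinarith [hA, hB, hD, hE]
  · have hu0 : 0 ≤ 1 - p*(x+y) := by linarith
    have hD : 0 ≤ (x-y)^2 * ((1 - 4*t^2) * (1 - p*(x+y))) :=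
      mul_nonneg (sq_nonneg _) (mul_nonneg (by nlinarith) (by linarith))
    have hE : 0 ≤ (x-y)^2 * (p - 2) := by nlinarith [sq_nonneg (x-y)]
    have hF : 0 ≤ (x-y)^2 * ((1 - p*(x+y)) * (1 + p*(x+y))) := mul_nonneg (sq_nonneg _) (mul_nonneg (by linarith) (by positivity))
    have hG : 0 ≤ p^2 * (x*y) * (x-y)^2 := by positivity
    have hH : 0 ≤ (x-y)^2 * (p*(x+y)) := by positivity
    nlinarith [hA, hB, hC, hD, hE, hF, hG, hH]


/-- Lemma a_1_left: `ℒ(πx², πy², x, y) ≥ 0` for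
`0 ≤ x, y ≤ 1/2`, `πx² + πy² ≤ 1` and `0 < t ≤ 1/2`. -/
theorem lemma_a1_left
    (x y t : ℝ)
    (hx0 : 0 ≤ x) (hx1 : x ≤ 1 / 2)
    (hy0 : 0 ≤ y) (hy1 : y ≤ 1 / 2)
    (hxy : Real.pi * x ^ 2 + Real.pi * y ^ 2 ≤ 1)
    (ht0 : 0 < t) (ht1 : t ≤ 1 / 2) :
    2 * t * Real.pi * (y ^ 2 - x ^ 2)
      + 4 * t ^ 2 * Real.pi * (y - x) * (y ^ 2 - x ^ 2)
      - Real.pi ^ 2 * (x ^ 2 + y ^ 2) ^ 2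
      + 2 * Real.pi * (x ^ 2 + y ^ 2)
      - 4 * t ^ 2 * (y - x) ^ 2 ≥ 0 := by
  exact aux_lemma_a1_left Real.pi x y t Real.pi_gt_three hx0 hx1 hy0 hy1 hxy ht0 ht1
end

section
/- For all real numbers y, t with 0 ≤ y ≤ 1/2 and 0 < t ≤ 4π/(1+8π), one has 2t(2πy² − 1) + 4t²(2πy² − 1)·y − 4t²y² + 1 ≥ 0. -/
open Real

/-- the case `x = 0` of the inequality `L(x, y, t) ≥ 0` of
Lemma a_1_right; the threshold `4π/(1+8π)` is sharp for this case. -/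
theorem lemma_a1_right_case_x_zero
    (y t : ℝ)
    (hy0 : 0 ≤ y) (hy1 : y ≤ 1 / 2)
    (ht0 : 0 < t) (ht1 : t ≤ 4 * Real.pi / (1 + 8 * Real.pi)) :
    2 * t * (2 * Real.pi * y ^ 2 - 1)
      + 4 * t ^ 2 * (2 * Real.pi * y ^ 2 - 1) * y
      - 4 * t ^ 2 * y ^ 2 + 1 ≥ 0 := by
  have hp : (3.141592 : ℝ) < Real.pi := Real.pi_gt_d6
  have hp2 : Real.pi < 3.15 := by linarith [Real.pi_lt_d2]
  have hd : (0:ℝ) < 1 + 8 * Real.pi := by linarith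
  have ht1' : t * (1 + 8 * Real.pi) ≤ 4 * Real.pi := by
    rw [div_eq_mul_inv] at ht1
    calc t * (1 + 8*Real.pi) ≤ 4 * Real.pi * (1+8*Real.pi)⁻¹ * (1+8*Real.pi) := by
          apply mul_le_mul_of_nonneg_right ht1 (le_of_lt hd)
      _ = 4 * Real.pi := by field_simp
  nlinarith [sq_nonneg (4*Real.pi*y - 1), sq_nonneg (t*(4*Real.pi*y-1)), mul_nonneg (sub_nonneg.2 ht1') (sq_nonneg (4*Real.pi*y-1)), mul_pos ht0 ht0, sq_nonneg y, mul_nonneg hy0 (sub_nonneg.2 ht1'), mul_nonneg (mul_nonneg hy0 hy0) (sub_nonneg.2 ht1'), sq_nonneg (1 - 2*t*y)]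
end

section
/- For all real numbers a, b, t with 0 < a ≤ 1/2, b ≥ a, and 0 < t ≤ 1/2, one has t·a·(2a² − 4b² + (4/π)·b) + b² − a² > 0. -/
open Real

lemma G_aux (a b t c : ℝ)
    (ha0 : 0 < a) (ha1 : a ≤ 1 / 2) (hab : a ≤ b)
    (ht0 : 0 < t) (ht1 : t ≤ 1 / 2) (hc : 1 < c) :
    t * a * (2 * a ^ 2 - 4 * b ^ 2 + c * b) + b ^ 2 - a ^ 2 > 0 := by
  rcases le_or_gt 0 (2 * a ^ 2 - 4 * b ^ 2 + c * b) with hE | hE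
  · rcases eq_or_lt_of_le hab with rfl | hab'
    · nlinarith [mul_pos (mul_pos (mul_pos ht0 ha0) ha0) (by linarith : (0:ℝ) < c - 2 * a)]
    · nlinarith [mul_nonneg (mul_pos ht0 ha0).le hE, mul_pos (sub_pos.mpr hab') (by linarith : (0:ℝ) < b + a)]
  · nlinarith [mul_nonneg ha0.le (sub_nonneg.mpr hab), sq_nonneg (b - a),
      mul_nonneg (mul_nonneg ha0.le (sub_nonneg.mpr hab)) (sub_nonneg.mpr hab),
      mul_pos ha0 (sub_pos.mpr hc), mul_nonneg (sub_nonneg.mpr ht1) (neg_nonneg.mpr hE.le),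
      mul_nonneg (mul_nonneg (sub_nonneg.mpr ht1) (neg_nonneg.mpr hE.le)) ha0.le,
      mul_nonneg (mul_nonneg ha0.le ha0.le) (sub_nonneg.mpr ha1)]

/-- strict positivity of the function `G` arising in the proof of
Lemma a_1_left after the change of variables `a = x − y > 0`, `b = x + y`. -/
theorem G_strictly_positive
    (a b t : ℝ)
    (ha0 : 0 < a) (ha1 : a ≤ 1 / 2) (hab : a ≤ b)
    (ht0 : 0 < t) (ht1 : t ≤ 1 / 2) :
    t * a * (2 * a ^ 2 - 4 * b ^ 2 + (4 / Real.pi) * b) + b ^ 2 - a ^ 2 > 0 := by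
  have hc : 1 < 4 / Real.pi := by
    rw [lt_div_iff₀ Real.pi_pos]
    nlinarith [Real.pi_lt_d2]
  exact G_aux a b t _ ha0 ha1 hab ht0 ht1 hc
end
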